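/- arXiv:1601.04533 — 6 statements merged into one kernel-verified Lean document; each statement's English description precedes it below -/
import Mathlib

section
/- For the complete graph K_{d+1}, the Wu characteristic equals (-1)^d, where the Wu characteristic of a graph G is the sum over all ordered pairs (x,y) of nonempty complete subgraphs of G with nonempty intersection of (-1)^{dim(x)+dim(y)}. -/
open Finset

variable {V : Type*} [Fintype V] [DecidableEq V]

/-- The simplices of a graph: nonempty complete subgraphs, encoded as vertex sets. -/
def simplices (G : SimpleGraph V) [DecidableRel G.Adj] : Finset (Finset V) :=
  Finset.univ.filter fun s => s.Nonempty ∧ ∀ a ∈ s, ∀ b ∈ s, a ≠ b → G.Adj a b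

/-- dimension of a simplex -/
def dimS (s : Finset V) : ℕ := s.card - 1

/-- Euler characteristic -/
def euler (G : SimpleGraph V) [DecidableRel G.Adj] : ℤ :=
  ∑ s ∈ simplices G, (-1 : ℤ) ^ dimS s

/-- Wu characteristic -/
def wu (G : SimpleGraph V) [DecidableRel G.Adj] : ℤ :=
  ∑ x ∈ simplices G, ∑ y ∈ simplices G,
    if (x ∩ y).Nonempty then (-1 : ℤ) ^ (dimS x + dimS y) else 0

/-- number of (k+1)-cliques, the k-th entry of the f-vector -/
def nf (G : SimpleGraph V) [DecidableRel G.Adj] (k : ℕ) : ℕ :=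
  ((simplices G).filter fun s => s.card = k + 1).card

lemma sum_pow_card_nonempty (u : Finset V) :
    ∑ s ∈ u.powerset.filter (fun s => s.Nonempty), (-1:ℤ)^s.card =
      (if u = ∅ then (1:ℤ) else 0) - 1 := by
  have h := Finset.sum_powerset_neg_one_pow_card (x := u)
  rw [← Finset.sum_filter_add_sum_filter_not u.powerset (fun s => s.Nonempty)] at h
  have he : u.powerset.filter (fun s => ¬ s.Nonempty) = {∅} := by
    ext s
    simp only [Finset.mem_filter, Finset.mem_powerset, Finset.not_nonempty_iff_eq_empty,
      Finset.mem_singleton]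
    exact ⟨fun h => h.2, fun h => ⟨h ▸ Finset.empty_subset u, h⟩⟩
  rw [he] at h
  simp at h
  linarith

lemma simplices_top : simplices (⊤ : SimpleGraph V) =
    (univ : Finset V).powerset.filter (fun s => s.Nonempty) := by
  ext s
  simp [simplices, SimpleGraph.top_adj]

theorem wu_complete (d : ℕ) :
    wu (⊤ : SimpleGraph (Fin (d + 1))) = (-1 : ℤ) ^ d := by
  classical
  set V := Fin (d + 1)
  set S := (univ : Finset V).powerset.filter (fun s => s.Nonempty) with hS
  have hcard : ∀ x ∈ S, (-1:ℤ) ^ x.card = -(-1:ℤ) ^ dimS x := by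
    intro x hx
    have hx' : x.Nonempty := (Finset.mem_filter.1 hx).2
    have : x.card = dimS x + 1 := by
      have := Finset.card_pos.2 hx'
      unfold dimS; omega
    rw [this]; ring
  have hsum : ∑ x ∈ S, (-1:ℤ)^x.card = -1 := by
    rw [sum_pow_card_nonempty]
    simp [Finset.univ_nonempty.ne_empty]
  have key : wu (⊤ : SimpleGraph V) =
      ∑ x ∈ S, ∑ y ∈ S, (if (x ∩ y).Nonempty then (-1:ℤ)^(x.card + y.card) else 0) := by
    rw [wu, simplices_top]
    refine Finset.sum_congr rfl fun x hx => Finset.sum_congr rfl fun y hy => ?_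
    have h1 := hcard x hx
    have h2 := hcard y hy
    rw [pow_add, pow_add]
    split
    · rw [h1, h2]; ring
    · rfl
  -- split the if
  have split : ∀ x ∈ S, ∑ y ∈ S, (if (x ∩ y).Nonempty then (-1:ℤ)^(x.card + y.card) else 0)
      = (∑ y ∈ S, (-1:ℤ)^(x.card + y.card))
        - ∑ y ∈ S, (if (x ∩ y) = ∅ then (-1:ℤ)^(x.card + y.card) else 0) := by
    intro x hx
    rw [← Finset.sum_sub_distrib]
    refine Finset.sum_congr rfl fun y hy => ?_
    by_cases h : (x ∩ y).Nonempty
    · rw [if_pos h, if_neg (by simpa [Finset.nonempty_iff_ne_empty] using h)]; ring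
    · rw [if_neg h, if_pos (by simpa [Finset.not_nonempty_iff_eq_empty] using h)]; ring
  have inner_disj : ∀ x ∈ S,
      ∑ y ∈ S, (if (x ∩ y) = ∅ then (-1:ℤ)^(x.card + y.card) else 0)
      = (-1:ℤ)^x.card * ((if x = univ then (1:ℤ) else 0) - 1) := by
    intro x hx
    have h0 : ∑ y ∈ S, (if (x ∩ y) = ∅ then (-1:ℤ)^(x.card + y.card) else 0)
        = ∑ y ∈ S.filter (fun y => x ∩ y = ∅), (-1:ℤ)^(x.card + y.card) :=
      (Finset.sum_filter _ _).symm
    rw [h0]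
    have hfe : S.filter (fun y => x ∩ y = ∅) = xᶜ.powerset.filter (fun s => s.Nonempty) := by
      ext y
      constructor
      · intro hy
        rcases Finset.mem_filter.1 hy with ⟨hyS, hd⟩
        rcases Finset.mem_filter.1 hyS with ⟨-, hne⟩
        refine Finset.mem_filter.2 ⟨Finset.mem_powerset.2 ?_, hne⟩
        intro a ha
        exact Finset.mem_compl.2 fun hax =>
          (Finset.eq_empty_iff_forall_notMem.1 hd a) (Finset.mem_inter.2 ⟨hax, ha⟩)
      · intro hy
        rcases Finset.mem_filter.1 hy with ⟨hsub, hne⟩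
        rw [Finset.mem_powerset] at hsub
        refine Finset.mem_filter.2
          ⟨Finset.mem_filter.2 ⟨Finset.mem_powerset.2 (Finset.subset_univ _), hne⟩, ?_⟩
        exact Finset.eq_empty_iff_forall_notMem.2 fun a ha =>
          Finset.mem_compl.1 (hsub (Finset.mem_inter.1 ha).2) (Finset.mem_inter.1 ha).1
    rw [hfe]
    have := sum_pow_card_nonempty (V := V) xᶜ
    simp only [pow_add, ← Finset.mul_sum, this]
    congr 1
    simp [Finset.compl_eq_empty_iff]
  have main : wu (⊤ : SimpleGraph V)
      = (∑ x ∈ S, (-1:ℤ)^x.card) * (∑ y ∈ S, (-1:ℤ)^y.card)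
        - ∑ x ∈ S, (-1:ℤ)^x.card * ((if x = univ then (1:ℤ) else 0) - 1) := by
    rw [key, Finset.sum_mul_sum, ← Finset.sum_sub_distrib]
    refine Finset.sum_congr rfl fun x hx => ?_
    rw [split x hx, inner_disj x hx]
    congr 1
    refine Finset.sum_congr rfl fun y hy => ?_
    rw [pow_add]
  rw [main, hsum]
  have hlast : ∑ x ∈ S, (-1:ℤ)^x.card * ((if x = univ then (1:ℤ) else 0) - 1)
      = (-1:ℤ)^(d+1) - ∑ x ∈ S, (-1:ℤ)^x.card := by
    have huniv : (univ : Finset V) ∈ S := by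
      simp [hS, Finset.univ_nonempty]
    have h1 : ∀ x ∈ S, (-1:ℤ)^x.card * ((if x = univ then (1:ℤ) else 0) - 1)
        = (if x = univ then (-1:ℤ)^x.card else 0) - (-1:ℤ)^x.card := by
      intro x hx; split <;> ring
    rw [Finset.sum_congr rfl h1, Finset.sum_sub_distrib,
      Finset.sum_ite_eq' S univ (fun x => (-1:ℤ)^x.card), if_pos huniv]
    congr 1
    rw [Finset.card_univ]
    show (-1:ℤ) ^ Fintype.card (Fin (d+1)) = _
    rw [Fintype.card_fin]
  rw [hlast, hsum, pow_succ]
  ring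
end

section
/- For a triangle-free finite simple graph G, the Wu characteristic equals v_0 - 5·v_1 + Σ_{e=(a,b)∈E} (deg(a) + deg(b)), where v_0 is the number of vertices and v_1 the number of edges. -/
open Finset

variable {V : Type*} [Fintype V] [DecidableEq V]

/-- pair-to-finset -/
def p2f : Sym2 V → Finset V :=
  Sym2.lift ⟨fun a b => {a, b}, fun a b => Finset.pair_comm a b⟩

@[simp] lemma p2f_mk (a b : V) : p2f s(a, b) = {a, b} := rfl

lemma mem_simplices {G : SimpleGraph V} [DecidableRel G.Adj] {s : Finset V} :
    s ∈ simplices G ↔ s.Nonempty ∧ ∀ a ∈ s, ∀ b ∈ s, a ≠ b → G.Adj a b := by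
  simp [simplices]

lemma singleton_mem_simplices (G : SimpleGraph V) [DecidableRel G.Adj] (v : V) :
    ({v} : Finset V) ∈ simplices G := by
  rw [mem_simplices]
  refine ⟨Finset.singleton_nonempty v, ?_⟩
  intro a ha b hb hab
  simp only [Finset.mem_singleton] at ha hb
  exact absurd (ha.trans hb.symm) hab

lemma pair_mem_simplices {G : SimpleGraph V} [DecidableRel G.Adj] {a b : V}
    (h : G.Adj a b) : ({a, b} : Finset V) ∈ simplices G := by
  rw [mem_simplices]
  refine ⟨Finset.insert_nonempty _ _, ?_⟩
  intro x hx y hy hxy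
  simp only [Finset.mem_insert, Finset.mem_singleton] at hx hy
  rcases hx with rfl | rfl <;> rcases hy with rfl | rfl
  · exact absurd rfl hxy
  · exact h
  · exact h.symm
  · exact absurd rfl hxy

lemma card_of_mem {G : SimpleGraph V} [DecidableRel G.Adj] (hfree : G.CliqueFree 3)
    {s : Finset V} (hs : s ∈ simplices G) : s.card = 1 ∨ s.card = 2 := by
  obtain ⟨hne, hcl⟩ := mem_simplices.mp hs
  have h1 : 1 ≤ s.card := hne.card_pos
  by_contra h
  push_neg at h
  have h3 : 3 ≤ s.card := by omega
  obtain ⟨t, hts, ht3⟩ := Finset.exists_subset_card_eq h3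
  exact hfree t ⟨fun a ha b hb hab => hcl a (hts ha) b (hts hb) hab, ht3⟩

lemma filter_card_one (G : SimpleGraph V) [DecidableRel G.Adj] :
    (simplices G).filter (fun s => s.card = 1)
      = Finset.univ.image (fun v => ({v} : Finset V)) := by
  ext s
  simp only [Finset.mem_filter, Finset.mem_image, Finset.mem_univ, true_and,
    Finset.card_eq_one]
  constructor
  · rintro ⟨-, a, rfl⟩; exact ⟨a, rfl⟩
  · rintro ⟨a, rfl⟩; exact ⟨singleton_mem_simplices G a, a, rfl⟩

lemma filter_card_two (G : SimpleGraph V) [DecidableRel G.Adj] :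
    (simplices G).filter (fun s => s.card = 2) = G.edgeFinset.image p2f := by
  ext s
  simp only [Finset.mem_filter, Finset.mem_image, SimpleGraph.mem_edgeFinset]
  constructor
  · rintro ⟨hs, h2⟩
    obtain ⟨a, b, hab, rfl⟩ := Finset.card_eq_two.mp h2
    have hadj : G.Adj a b := (mem_simplices.mp hs).2 a (by simp) b (by simp) hab
    exact ⟨s(a, b), hadj, rfl⟩
  · rintro ⟨e, he, rfl⟩
    induction e with
    | _ a b =>
      rw [SimpleGraph.mem_edgeSet] at he
      exact ⟨pair_mem_simplices he, Finset.card_pair he.ne⟩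

lemma p2f_injOn (G : SimpleGraph V) [DecidableRel G.Adj] :
    ∀ e ∈ G.edgeFinset, ∀ f ∈ G.edgeFinset, p2f e = p2f f → e = f := by
  intro e he f hf hef
  induction e with
  | _ a b =>
    induction f with
    | _ c d =>
      rw [SimpleGraph.mem_edgeFinset, SimpleGraph.mem_edgeSet] at he hf
      simp only [p2f_mk] at hef
      have ha : a = c ∨ a = d := by
        have : a ∈ ({c, d} : Finset V) := hef ▸ Finset.mem_insert_self a {b}
        simpa using this
      have hb : b = c ∨ b = d := by
        have : b ∈ ({c, d} : Finset V) := hef ▸ (by simp : b ∈ ({a, b} : Finset V))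
        simpa using this
      rw [Sym2.eq_iff]
      rcases ha with rfl | rfl
      · left
        refine ⟨rfl, ?_⟩
        rcases hb with rfl | rfl
        · exact absurd rfl he.ne
        · rfl
      · right
        refine ⟨rfl, ?_⟩
        rcases hb with rfl | rfl
        · rfl
        · exact absurd rfl he.ne

lemma filter_mem_eq (G : SimpleGraph V) [DecidableRel G.Adj] (a : V) :
    ((simplices G).filter (fun s => s.card = 2)).filter (fun s => a ∈ s)
      = (G.neighborFinset a).image (fun c => ({a, c} : Finset V)) := by
  ext s
  simp only [Finset.mem_filter, Finset.mem_image, SimpleGraph.mem_neighborFinset]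
  constructor
  · rintro ⟨⟨hs, h2⟩, ha⟩
    obtain ⟨x, y, hxy, rfl⟩ := Finset.card_eq_two.mp h2
    have hcl := (mem_simplices.mp hs).2
    rcases Finset.mem_insert.mp ha with rfl | ha'
    · exact ⟨y, hcl a (by simp) y (by simp) hxy, rfl⟩
    · rw [Finset.mem_singleton] at ha'
      subst ha'
      exact ⟨x, hcl a (by simp) x (by simp) (Ne.symm hxy), Finset.pair_comm a x⟩
  · rintro ⟨c, hadj, rfl⟩
    exact ⟨⟨pair_mem_simplices hadj, Finset.card_pair hadj.ne⟩, Finset.mem_insert_self a _⟩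

lemma card_filter_mem (G : SimpleGraph V) [DecidableRel G.Adj] (a : V) :
    (((simplices G).filter (fun s => s.card = 2)).filter (fun s => a ∈ s)).card
      = G.degree a := by
  rw [filter_mem_eq, Finset.card_image_of_injOn, SimpleGraph.degree]
  intro c hc c' hc' h
  rw [Finset.mem_coe, SimpleGraph.mem_neighborFinset] at hc hc'
  dsimp only at h
  have : c ∈ ({a, c'} : Finset V) := by
    rw [← h]; simp
  rcases Finset.mem_insert.mp this with rfl | h'
  · exact absurd rfl hc.ne'
  · exact Finset.mem_singleton.mp h'

lemma filter_both (G : SimpleGraph V) [DecidableRel G.Adj] {a b : V} (hab : G.Adj a b) :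
    ((simplices G).filter (fun s => s.card = 2)).filter (fun s => a ∈ s ∧ b ∈ s)
      = {({a, b} : Finset V)} := by
  ext s
  simp only [Finset.mem_filter, Finset.mem_singleton]
  constructor
  · rintro ⟨⟨hs, h2⟩, ha, hb⟩
    have hsub : ({a, b} : Finset V) ⊆ s := by
      intro x hx
      rcases Finset.mem_insert.mp hx with rfl | hx'
      · exact ha
      · rw [Finset.mem_singleton] at hx'; subst hx'; exact hb
    have : s.card ≤ ({a, b} : Finset V).card := by
      rw [h2, Finset.card_pair hab.ne]
    exact (Finset.eq_of_subset_of_card_le hsub this).symm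
  · rintro rfl
    exact ⟨⟨pair_mem_simplices hab, Finset.card_pair hab.ne⟩, by simp, by simp⟩

lemma count_meeting (G : SimpleGraph V) [DecidableRel G.Adj] {a b : V}
    (hab : G.Adj a b) :
    (((simplices G).filter (fun s => s.card = 2)).filter
        (fun y => (({a, b} : Finset V) ∩ y).Nonempty)).card + 1
      = G.degree a + G.degree b := by
  set S2 := (simplices G).filter (fun s => s.card = 2) with hS2
  have hiff : ∀ y : Finset V, (({a, b} : Finset V) ∩ y).Nonempty ↔ (a ∈ y ∨ b ∈ y) := by
    intro y
    constructor
    · rintro ⟨x, hx⟩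
      rw [Finset.mem_inter] at hx
      rcases Finset.mem_insert.mp hx.1 with rfl | h'
      · exact Or.inl hx.2
      · rw [Finset.mem_singleton] at h'; subst h'; exact Or.inr hx.2
    · rintro (h | h)
      · exact ⟨a, Finset.mem_inter.mpr ⟨by simp, h⟩⟩
      · exact ⟨b, Finset.mem_inter.mpr ⟨by simp, h⟩⟩
  have h1 : S2.filter (fun y => (({a, b} : Finset V) ∩ y).Nonempty)
      = S2.filter (fun y => a ∈ y ∨ b ∈ y) :=
    Finset.filter_congr (fun y _ => hiff y)
  rw [h1, Finset.filter_or]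
  have h2 : S2.filter (fun y => a ∈ y) ∩ S2.filter (fun y => b ∈ y)
      = S2.filter (fun y => a ∈ y ∧ b ∈ y) := (Finset.filter_and _ _ _).symm
  have h3 := Finset.card_union_add_card_inter (S2.filter (fun y => a ∈ y))
    (S2.filter (fun y => b ∈ y))
  rw [h2, filter_both G hab] at h3
  rw [card_filter_mem, card_filter_mem] at h3
  simpa using h3

theorem wu_triangle_free (G : SimpleGraph V) [DecidableRel G.Adj]
    (hfree : G.CliqueFree 3) :
    wu G = (Fintype.card V : ℤ) - 5 * (G.edgeFinset.card : ℤ) +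
      ∑ e ∈ G.edgeFinset,
        Sym2.lift ⟨fun a b => (G.degree a : ℤ) + (G.degree b : ℤ),
          fun a b => by ring⟩ e := by
  classical
  set S1 := (simplices G).filter (fun s => s.card = 1) with hS1
  set S2 := (simplices G).filter (fun s => s.card = 2) with hS2
  have hsplit : ∀ f : Finset V → ℤ,
      ∑ s ∈ simplices G, f s = ∑ s ∈ S1, f s + ∑ s ∈ S2, f s := by
    intro f
    rw [← Finset.sum_filter_add_sum_filter_not (simplices G) (fun s => s.card = 1) f]
    congr 1
    refine Finset.sum_congr ?_ (fun _ _ => rfl)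
    refine Finset.filter_congr ?_
    intro s hs
    rcases card_of_mem hfree hs with h | h <;> simp [h]
  have hdim1 : ∀ x ∈ S1, dimS x = 0 := by
    intro x hx
    rw [hS1, Finset.mem_filter] at hx
    simp [dimS, hx.2]
  have hdim2 : ∀ x ∈ S2, dimS x = 1 := by
    intro x hx
    rw [hS2, Finset.mem_filter] at hx
    simp [dimS, hx.2]
  have hcard2 : S2.card = G.edgeFinset.card := by
    rw [hS2, filter_card_two]
    exact Finset.card_image_of_injOn (p2f_injOn G)
  -- the four partial sums
  have hT11 : (∑ x ∈ S1, ∑ y ∈ S1,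
      if (x ∩ y).Nonempty then (-1 : ℤ) ^ (dimS x + dimS y) else 0)
      = (Fintype.card V : ℤ) := by
    have : ∀ x ∈ S1, (∑ y ∈ S1,
        if (x ∩ y).Nonempty then (-1 : ℤ) ^ (dimS x + dimS y) else 0)
        = ∑ y ∈ S1, (if (x ∩ y).Nonempty then (1 : ℤ) else 0) := by
      intro x hx
      refine Finset.sum_congr rfl fun y hy => ?_
      rw [hdim1 x hx, hdim1 y hy]
      norm_num
    rw [Finset.sum_congr rfl this, hS1, filter_card_one]
    rw [Finset.sum_image (fun x _ y _ h => Finset.singleton_injective h)]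
    have : ∀ u : V, (∑ y ∈ Finset.univ.image (fun v => ({v} : Finset V)),
        if (({u} : Finset V) ∩ y).Nonempty then (1 : ℤ) else 0) = 1 := by
      intro u
      rw [Finset.sum_image (fun x _ y _ h => Finset.singleton_injective h)]
      have huv : ∀ v : V, (({u} : Finset V) ∩ {v}).Nonempty ↔ u = v := by
        intro v
        constructor
        · rintro ⟨x, hx⟩
          rw [Finset.mem_inter, Finset.mem_singleton, Finset.mem_singleton] at hx
          rw [← hx.1, hx.2]
        · rintro rfl; exact ⟨u, by simp⟩
      simp only [huv]
      simp
    rw [Finset.sum_congr rfl (fun u _ => this u)]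
    simp [Finset.card_univ]
  have inner1 : ∀ y : Finset V, y.card = 2 →
      (∑ x ∈ S1, if (x ∩ y).Nonempty then (-1 : ℤ) else 0) = -2 := by
    intro y hy
    rw [hS1, filter_card_one,
      Finset.sum_image (fun x _ y _ h => Finset.singleton_injective h)]
    have huy : ∀ u : V, (({u} : Finset V) ∩ y).Nonempty ↔ u ∈ y := by
      intro u
      constructor
      · rintro ⟨x, hx⟩
        rw [Finset.mem_inter, Finset.mem_singleton] at hx
        exact hx.1 ▸ hx.2
      · intro h; exact ⟨u, by simp [h]⟩
    simp only [huy]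
    rw [Finset.sum_ite_mem, Finset.univ_inter, Finset.sum_const, hy]
    simp
  have hT12 : (∑ x ∈ S1, ∑ y ∈ S2,
      if (x ∩ y).Nonempty then (-1 : ℤ) ^ (dimS x + dimS y) else 0)
      = -2 * (G.edgeFinset.card : ℤ) := by
    have step : ∀ x ∈ S1, (∑ y ∈ S2,
        if (x ∩ y).Nonempty then (-1 : ℤ) ^ (dimS x + dimS y) else 0)
        = ∑ y ∈ S2, (if (x ∩ y).Nonempty then (-1 : ℤ) else 0) := by
      intro x hx
      refine Finset.sum_congr rfl fun y hy => ?_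
      rw [hdim1 x hx, hdim2 y hy]
      norm_num
    rw [Finset.sum_congr rfl step, Finset.sum_comm]
    have : ∀ y ∈ S2, (∑ x ∈ S1, if (x ∩ y).Nonempty then (-1 : ℤ) else 0) = -2 := by
      intro y hy
      rw [hS2, Finset.mem_filter] at hy
      exact inner1 y hy.2
    rw [Finset.sum_congr rfl this, Finset.sum_const, hcard2, nsmul_eq_mul]
    ring
  have hT21 : (∑ x ∈ S2, ∑ y ∈ S1,
      if (x ∩ y).Nonempty then (-1 : ℤ) ^ (dimS x + dimS y) else 0)
      = -2 * (G.edgeFinset.card : ℤ) := by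
    have step : ∀ x ∈ S2, (∑ y ∈ S1,
        if (x ∩ y).Nonempty then (-1 : ℤ) ^ (dimS x + dimS y) else 0)
        = ∑ y ∈ S1, (if (y ∩ x).Nonempty then (-1 : ℤ) else 0) := by
      intro x hx
      refine Finset.sum_congr rfl fun y hy => ?_
      rw [hdim2 x hx, hdim1 y hy, Finset.inter_comm]
      norm_num
    rw [Finset.sum_congr rfl step]
    have : ∀ x ∈ S2, (∑ y ∈ S1, if (y ∩ x).Nonempty then (-1 : ℤ) else 0) = -2 := by
      intro x hx
      rw [hS2, Finset.mem_filter] at hx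
      exact inner1 x hx.2
    rw [Finset.sum_congr rfl this, Finset.sum_const, hcard2, nsmul_eq_mul]
    ring
  have hT22 : (∑ x ∈ S2, ∑ y ∈ S2,
      if (x ∩ y).Nonempty then (-1 : ℤ) ^ (dimS x + dimS y) else 0)
      = (∑ e ∈ G.edgeFinset,
          Sym2.lift ⟨fun a b => (G.degree a : ℤ) + (G.degree b : ℤ),
            fun a b => by ring⟩ e) - (G.edgeFinset.card : ℤ) := by
    have step : ∀ x ∈ S2, (∑ y ∈ S2,
        if (x ∩ y).Nonempty then (-1 : ℤ) ^ (dimS x + dimS y) else 0)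
        = ((S2.filter (fun y => (x ∩ y).Nonempty)).card : ℤ) := by
      intro x hx
      have : (∑ y ∈ S2, if (x ∩ y).Nonempty then (-1 : ℤ) ^ (dimS x + dimS y) else 0)
          = ∑ y ∈ S2, (if (x ∩ y).Nonempty then (1 : ℤ) else 0) := by
        refine Finset.sum_congr rfl fun y hy => ?_
        rw [hdim2 x hx, hdim2 y hy]
        norm_num
      rw [this, Finset.sum_boole]
    have hE : (G.edgeFinset.card : ℤ) = ∑ _e ∈ G.edgeFinset, (1 : ℤ) := by
      rw [Finset.sum_const, nsmul_eq_mul, mul_one]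
    rw [Finset.sum_congr rfl step, hE, ← Finset.sum_sub_distrib]
    simp only [hS2, filter_card_two]
    rw [Finset.sum_image (p2f_injOn G)]
    refine Finset.sum_congr rfl fun e he => ?_
    induction e with
    | _ a b =>
      rw [SimpleGraph.mem_edgeFinset, SimpleGraph.mem_edgeSet] at he
      have h := count_meeting G he
      simp only [p2f_mk, Sym2.lift_mk]
      rw [← filter_card_two]
      convert congrArg (fun n : ℕ => (n : ℤ) - 1) h using 1 <;> push_cast <;> ring_nf
  -- assemble
  have expand : wu G =
      (∑ x ∈ S1, ((∑ y ∈ S1,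
        if (x ∩ y).Nonempty then (-1 : ℤ) ^ (dimS x + dimS y) else 0)
        + ∑ y ∈ S2,
        if (x ∩ y).Nonempty then (-1 : ℤ) ^ (dimS x + dimS y) else 0))
      + (∑ x ∈ S2, ((∑ y ∈ S1,
        if (x ∩ y).Nonempty then (-1 : ℤ) ^ (dimS x + dimS y) else 0)
        + ∑ y ∈ S2,
        if (x ∩ y).Nonempty then (-1 : ℤ) ^ (dimS x + dimS y) else 0)) := by
    rw [wu, hsplit]
    congr 1 <;> exact Finset.sum_congr rfl (fun x _ => hsplit _)
  rw [expand, Finset.sum_add_distrib, Finset.sum_add_distrib, hT11, hT12, hT21, hT22]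
  ring
end

section
/- For a finite simple graph G with Stanley-Reisner polynomial f_G, the Wu characteristic satisfies ω(G) = f_G(-1,...,-1)^2 - (f_G^2)(-1,...,-1), where f_G^2 denotes the squarefree part of the ordinary polynomial product f_G · f_G (i.e., the sum of monomials of f_G·f_G that are squarefree). -/
open Finset

variable {V : Type*} [Fintype V] [DecidableEq V]

/-- Stanley-Reisner polynomial of a graph. -/
noncomputable def stanleyReisner (G : SimpleGraph V) [DecidableRel G.Adj] :
    MvPolynomial V ℤ :=
  ∑ x ∈ simplices G, ∏ i ∈ x, MvPolynomial.X i

/-- The squarefree part of a polynomial: the sum of its monomials in which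
every variable appears with exponent at most one. -/
noncomputable def squarefreePart (p : MvPolynomial V ℤ) : MvPolynomial V ℤ :=
  ∑ m ∈ p.support.filter (fun m => ∀ i : V, m i ≤ 1),
    MvPolynomial.monomial m (p.coeff m)

section Aux
open MvPolynomial

noncomputable def eS (s : Finset V) : V →₀ ℕ := ∑ i ∈ s, Finsupp.single i 1

lemma eS_apply (s : Finset V) (j : V) : eS s j = if j ∈ s then 1 else 0 := by
  classical
  simp [eS, Finsupp.finset_sum_apply, Finsupp.single_apply]

lemma prod_X_eq (s : Finset V) :
    (∏ i ∈ s, (X i : MvPolynomial V ℤ)) = monomial (eS s) 1 := by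
  classical
  induction s using Finset.cons_induction with
  | empty => simp [eS]
  | cons a s ha ih =>
      rw [Finset.prod_cons, ih, X, monomial_mul, one_mul]; simp only [eS]
      rw [Finset.sum_cons]

lemma eS_add_apply_le (x y : Finset V) (h : Disjoint x y) (i : V) :
    (eS x + eS y) i ≤ 1 := by
  rw [Finsupp.add_apply, eS_apply, eS_apply]
  by_cases hx : i ∈ x
  · simp [hx, Finset.disjoint_left.1 h hx]
  · by_cases hy : i ∈ y <;> simp [hx, hy]

lemma eS_add_apply_two {x y : Finset V} {i : V} (hx : i ∈ x) (hy : i ∈ y) :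
    (eS x + eS y) i = 2 := by
  rw [Finsupp.add_apply, eS_apply, eS_apply]
  simp [hx, hy]

lemma squarefreePart_eq {p A B : MvPolynomial V ℤ} (hp : p = A + B)
    (hA : ∀ m : V →₀ ℕ, ¬(∀ i, m i ≤ 1) → A.coeff m = 0)
    (hB : ∀ m : V →₀ ℕ, (∀ i, m i ≤ 1) → B.coeff m = 0) :
    squarefreePart p = A := by
  classical
  have hc : ∀ m : V →₀ ℕ, (∀ i, m i ≤ 1) → p.coeff m = A.coeff m := by
    intro m hm
    rw [hp, MvPolynomial.coeff_add, hB m hm, add_zero]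
  rw [squarefreePart]
  have h1 : ∑ m ∈ p.support.filter (fun m => ∀ i : V, m i ≤ 1),
      MvPolynomial.monomial m (p.coeff m)
      = ∑ m ∈ p.support.filter (fun m => ∀ i : V, m i ≤ 1),
      MvPolynomial.monomial m (A.coeff m) := by
    refine Finset.sum_congr rfl fun m hm => ?_
    rw [hc m (Finset.mem_filter.1 hm).2]
  rw [h1]
  conv_rhs => rw [← MvPolynomial.support_sum_monomial_coeff A]
  refine (Finset.sum_subset ?_ ?_).symm
  · intro m hm
    have hne := MvPolynomial.mem_support_iff.1 hm
    have hsq : ∀ i, m i ≤ 1 := by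
      by_contra h
      exact hne (hA m h)
    refine Finset.mem_filter.2 ⟨MvPolynomial.mem_support_iff.2 ?_, hsq⟩
    rw [hc m hsq]; exact hne
  · intro m _ hm
    rw [MvPolynomial.notMem_support_iff.1 hm, map_zero]

end Aux

open MvPolynomial in
theorem wu_eq_stanleyReisner (G : SimpleGraph V) [DecidableRel G.Adj] :
    wu G = (MvPolynomial.eval (fun _ : V => (-1 : ℤ)) (stanleyReisner G)) ^ 2 -
      MvPolynomial.eval (fun _ : V => (-1 : ℤ))
        (squarefreePart (stanleyReisner G * stanleyReisner G)) := by
  classical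
  set S := simplices G with hSdef
  set c : V → ℤ := fun _ => (-1 : ℤ)
  set A : MvPolynomial V ℤ :=
    ∑ p ∈ (S ×ˢ S).filter (fun p => Disjoint p.1 p.2),
      (∏ i ∈ p.1, X i) * (∏ i ∈ p.2, X i) with hAdef
  set B : MvPolynomial V ℤ :=
    ∑ p ∈ (S ×ˢ S).filter (fun p => ¬ Disjoint p.1 p.2),
      (∏ i ∈ p.1, X i) * (∏ i ∈ p.2, X i) with hBdef
  have hprod : ∀ x y : Finset V,
      (∏ i ∈ x, (X i : MvPolynomial V ℤ)) * (∏ i ∈ y, X i)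
        = monomial (eS x + eS y) 1 := by
    intro x y
    rw [prod_X_eq, prod_X_eq, monomial_mul, one_mul]
  have hsplit : stanleyReisner G * stanleyReisner G = A + B := by
    rw [stanleyReisner, Finset.sum_mul_sum, ← Finset.sum_product', hAdef, hBdef,
      Finset.sum_filter_add_sum_filter_not]
  have hcoeffA : ∀ m : V →₀ ℕ, ¬(∀ i, m i ≤ 1) → A.coeff m = 0 := by
    intro m hm
    rw [hAdef, MvPolynomial.coeff_sum]
    refine Finset.sum_eq_zero fun p hp => ?_
    have hd := (Finset.mem_filter.1 hp).2
    rw [hprod, coeff_monomial, if_neg]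
    intro he
    exact hm fun i => he ▸ eS_add_apply_le p.1 p.2 hd i
  have hcoeffB : ∀ m : V →₀ ℕ, (∀ i, m i ≤ 1) → B.coeff m = 0 := by
    intro m hm
    rw [hBdef, MvPolynomial.coeff_sum]
    refine Finset.sum_eq_zero fun p hp => ?_
    have hd := (Finset.mem_filter.1 hp).2
    obtain ⟨i, hi⟩ := Finset.not_disjoint_iff_nonempty_inter.1 hd
    rw [Finset.mem_inter] at hi
    rw [hprod, coeff_monomial, if_neg]
    intro he
    have := hm i
    rw [← he, eS_add_apply_two hi.1 hi.2] at this
    omega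
  have hsq : squarefreePart (stanleyReisner G * stanleyReisner G) = A :=
    squarefreePart_eq hsplit hcoeffA hcoeffB
  have hevalprod : ∀ x : Finset V,
      MvPolynomial.eval c (∏ i ∈ x, (X i : MvPolynomial V ℤ)) = (-1) ^ x.card := by
    intro x
    rw [map_prod]
    simp [c]
  have hevalA : MvPolynomial.eval c A
      = ∑ p ∈ (S ×ˢ S).filter (fun p => Disjoint p.1 p.2),
          (-1 : ℤ) ^ (p.1.card + p.2.card) := by
    rw [hAdef, map_sum]
    refine Finset.sum_congr rfl fun p _ => ?_
    rw [map_mul, hevalprod, hevalprod, ← pow_add]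
  have hevalSR : MvPolynomial.eval c (stanleyReisner G) = ∑ x ∈ S, (-1 : ℤ) ^ x.card := by
    rw [stanleyReisner, map_sum]
    exact Finset.sum_congr rfl fun x _ => hevalprod x
  rw [hsq, hevalA, hevalSR, sq, Finset.sum_mul_sum, ← Finset.sum_product']
  have hT : ∑ p ∈ S ×ˢ S, (-1 : ℤ) ^ p.1.card * (-1) ^ p.2.card
      = ∑ p ∈ (S ×ˢ S).filter (fun p => Disjoint p.1 p.2),
          (-1 : ℤ) ^ (p.1.card + p.2.card)
        + ∑ p ∈ (S ×ˢ S).filter (fun p => ¬ Disjoint p.1 p.2),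
          (-1 : ℤ) ^ (p.1.card + p.2.card) := by
    rw [← Finset.sum_filter_add_sum_filter_not (S ×ˢ S) (fun p => Disjoint p.1 p.2)]
    congr 1 <;> exact Finset.sum_congr rfl fun p _ => by rw [pow_add]
  rw [hT, add_sub_cancel_left]
  rw [wu, ← Finset.sum_product', ← Finset.sum_filter]
  refine Finset.sum_congr ?_ ?_
  · ext p
    simp [Finset.not_disjoint_iff_nonempty_inter, hSdef]
  · intro p hp
    rw [Finset.mem_filter, Finset.mem_product] at hp
    obtain ⟨⟨h1, h2⟩, _⟩ := hp
    have hn1 : p.1.Nonempty := ((Finset.mem_filter.1 h1).2).1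
    have hn2 : p.2.Nonempty := ((Finset.mem_filter.1 h2).2).1
    have e1 : p.1.card = dimS p.1 + 1 := by
      have := Finset.card_pos.2 hn1
      simp [dimS]; omega
    have e2 : p.2.card = dimS p.2 + 1 := by
      have := Finset.card_pos.2 hn2
      simp [dimS]; omega
    rw [e1, e2]
    ring
end

section
/- For any finite simple graph G and any valuation X (i.e., X(A) = Σ_k a_k·v_k(A) for a fixed coefficient vector a, where v_k counts (k+1)-cliques), the curvature K(v) = Σ_{k≥0} a_k·V_{k-1}(v)/(k+1) satisfies Gauss-Bonnet: Σ_{v∈V} K(v) = X(G), where V_k(v) is the number of (k+1)-cliques in the unit sphere S(v) and V_{-1}(v) = 1. -/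
open Finset

variable {V : Type*} [Fintype V] [DecidableEq V]

instance inducedDecidable (G : SimpleGraph V) [DecidableRel G.Adj] (s : Set V)
    [DecidablePred (· ∈ s)] : DecidableRel (SimpleGraph.induce s G).Adj :=
  fun a b => inferInstanceAs (Decidable (G.Adj a b))

/-- The unit sphere of `G` at `v`: the subgraph induced on the neighbors of `v`. -/
def sphere (G : SimpleGraph V) [DecidableRel G.Adj] (v : V) :
    SimpleGraph ((G.neighborFinset v : Set V)) :=
  SimpleGraph.induce (G.neighborFinset v : Set V) G

instance sphereDecidable (G : SimpleGraph V) [DecidableRel G.Adj] (v : V) :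
    DecidableRel (sphere G v).Adj :=
  fun a b => inferInstanceAs (Decidable (G.Adj a b))

/-- `V_{k-1}(v)`, with the convention `V_{-1}(v) = 1`. -/
def sphereCount (G : SimpleGraph V) [DecidableRel G.Adj] (v : V) (k : ℕ) : ℕ :=
  if k = 0 then 1 else nf (sphere G v) (k - 1)


lemma nf_zero (G : SimpleGraph V) [DecidableRel G.Adj] :
    nf G 0 = Fintype.card V := by
  unfold nf
  rw [Fintype.card]
  symm
  apply Finset.card_bij (fun v _ => ({v} : Finset V))
  · intro v _
    simp [simplices]
  · intro v _ w _ h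
    simpa using h
  · intro s hs
    simp only [Finset.mem_filter] at hs
    obtain ⟨x, hx⟩ := Finset.card_eq_one.mp hs.2
    exact ⟨x, Finset.mem_univ x, hx.symm⟩

lemma nf_sphere (G : SimpleGraph V) [DecidableRel G.Adj] (v : V) (m : ℕ) :
    nf (sphere G v) m
      = ((simplices G).filter fun t => t.card = m + 2 ∧ v ∈ t).card := by
  unfold nf
  apply Finset.card_bij (fun s _ => insert v (s.image Subtype.val))
  · intro s hs
    simp only [Finset.mem_filter, simplices, Finset.mem_univ, true_and] at hs ⊢
    obtain ⟨⟨hne, hcl⟩, hcard⟩ := hs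
    have hvnot : v ∉ s.image Subtype.val := by
      intro hv
      simp only [Finset.mem_image] at hv
      obtain ⟨⟨x, hx⟩, _, hxe⟩ := hv
      rw [Finset.mem_coe, SimpleGraph.mem_neighborFinset] at hx
      exact G.irrefl (hxe ▸ hx)
    have hmem : ∀ x ∈ s.image Subtype.val, G.Adj v x := by
      intro x hx
      simp only [Finset.mem_image] at hx
      obtain ⟨⟨y, hy⟩, _, rfl⟩ := hx
      rw [Finset.mem_coe, SimpleGraph.mem_neighborFinset] at hy
      exact hy
    refine ⟨⟨Finset.insert_nonempty _ _, ?_⟩, ?_, Finset.mem_insert_self _ _⟩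
    · intro x hx y hy hxy
      rcases Finset.mem_insert.mp hx with rfl | hx
      · rcases Finset.mem_insert.mp hy with rfl | hy
        · exact absurd rfl hxy
        · exact hmem y hy
      · rcases Finset.mem_insert.mp hy with rfl | hy
        · exact (hmem x hx).symm
        · simp only [Finset.mem_image] at hx hy
          obtain ⟨x', hx', rfl⟩ := hx
          obtain ⟨y', hy', rfl⟩ := hy
          have := hcl x' hx' y' hy' (fun h => hxy (congrArg Subtype.val h))
          exact this
    · rw [Finset.card_insert_of_notMem hvnot,
        Finset.card_image_of_injective _ Subtype.val_injective, hcard]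
  · intro s hs t ht h
    have hvs : v ∉ s.image Subtype.val := by
      intro hv
      simp only [Finset.mem_image] at hv
      obtain ⟨⟨x, hx⟩, _, hxe⟩ := hv
      rw [Finset.mem_coe, SimpleGraph.mem_neighborFinset] at hx
      exact G.irrefl (hxe ▸ hx)
    have hvt : v ∉ t.image Subtype.val := by
      intro hv
      simp only [Finset.mem_image] at hv
      obtain ⟨⟨x, hx⟩, _, hxe⟩ := hv
      rw [Finset.mem_coe, SimpleGraph.mem_neighborFinset] at hx
      exact G.irrefl (hxe ▸ hx)
    have himg : s.image Subtype.val = t.image Subtype.val := by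
      ext x
      constructor
      · intro hx
        have hxv : x ≠ v := fun h => hvs (h ▸ hx)
        have : x ∈ insert v (t.image Subtype.val) := h ▸ Finset.mem_insert_of_mem hx
        exact (Finset.mem_insert.mp this).resolve_left hxv
      · intro hx
        have hxv : x ≠ v := fun h => hvt (h ▸ hx)
        have : x ∈ insert v (s.image Subtype.val) := h ▸ Finset.mem_insert_of_mem hx
        exact (Finset.mem_insert.mp this).resolve_left hxv
    exact Finset.image_injective Subtype.val_injective himg
  · intro t ht
    simp only [Finset.mem_filter, simplices, Finset.mem_univ, true_and] at ht
    obtain ⟨⟨hne, hcl⟩, hcard, hv⟩ := ht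
    have hsub : ∀ x ∈ t.erase v, x ∈ (G.neighborFinset v : Set V) := by
      intro x hx
      rw [Finset.mem_coe, SimpleGraph.mem_neighborFinset]
      exact (hcl x (Finset.mem_of_mem_erase hx) v hv (Finset.ne_of_mem_erase hx)).symm
    refine ⟨(t.erase v).subtype (· ∈ (G.neighborFinset v : Set V)), ?_, ?_⟩
    · simp only [Finset.mem_filter, simplices, Finset.mem_univ, true_and]
      have hcard' : ((t.erase v).subtype (· ∈ (G.neighborFinset v : Set V))).card
          = m + 1 := by
        rw [Finset.card_subtype, Finset.filter_true_of_mem hsub,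
          Finset.card_erase_of_mem hv, hcard]
        omega
      constructor
      · constructor
        · rw [← Finset.card_pos, hcard']; omega
        · intro x hx y hy hxy
          simp only [Finset.mem_subtype] at hx hy
          show G.Adj x.val y.val
          exact hcl x.val (Finset.mem_of_mem_erase hx) y.val
            (Finset.mem_of_mem_erase hy) (fun h => hxy (Subtype.ext h))
      · exact hcard'
    · have : ((t.erase v).subtype (· ∈ (G.neighborFinset v : Set V))).image
          Subtype.val = t.erase v := by
        ext x
        simp only [Finset.mem_image, Finset.mem_subtype]
        constructor
        · rintro ⟨⟨y, hy⟩, hy', rfl⟩; exact hy'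
        · intro hx; exact ⟨⟨x, hsub x hx⟩, hx, rfl⟩
      rw [this, Finset.insert_erase hv]

lemma sum_sphereCount (G : SimpleGraph V) [DecidableRel G.Adj] (k : ℕ) :
    ∑ v : V, sphereCount G v k = (k + 1) * nf G k := by
  cases k with
  | zero =>
      simp [sphereCount, nf_zero, Finset.card_univ]
  | succ m =>
      have hsc : ∀ v : V, sphereCount G v (m + 1)
          = ∑ t ∈ (simplices G).filter (fun t => t.card = m + 2),
              if v ∈ t then 1 else 0 := by
        intro v
        have h1 : sphereCount G v (m + 1) = nf (sphere G v) m := by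
          simp [sphereCount]
        rw [h1, nf_sphere, ← Finset.filter_filter, Finset.card_filter]
      simp only [hsc]
      rw [Finset.sum_comm]
      have hrow : ∀ t ∈ (simplices G).filter (fun t => t.card = m + 2),
          (∑ v : V, if v ∈ t then (1 : ℕ) else 0) = m + 2 := by
        intro t ht
        simp only [Finset.mem_filter] at ht
        rw [Finset.sum_ite_mem, Finset.univ_inter, Finset.sum_const,
          smul_eq_mul, mul_one, ht.2]
      rw [Finset.sum_congr rfl hrow, Finset.sum_const, smul_eq_mul]
      unfold nf
      ring

theorem gauss_bonnet_valuation (G : SimpleGraph V) [DecidableRel G.Adj]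
    (a : ℕ → ℚ) :
    ∑ v : V, ∑ k ∈ Finset.range (Fintype.card V + 1),
        a k * (sphereCount G v k : ℚ) / (k + 1)
      = ∑ k ∈ Finset.range (Fintype.card V + 1), a k * (nf G k : ℚ) := by
  rw [Finset.sum_comm]
  apply Finset.sum_congr rfl
  intro k _
  have hsum : (∑ v : V, (sphereCount G v k : ℚ)) = (k + 1) * (nf G k : ℚ) := by
    rw [← Nat.cast_sum, sum_sphereCount]
    push_cast
    ring
  have hk : ((k : ℚ) + 1) ≠ 0 := by positivity
  rw [← Finset.sum_div, ← Finset.mul_sum, hsum]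
  field_simp
end

section
/- Poincaré-Hopf for valuations: Let G be a finite simple graph, f an injective real-valued function on the vertices, and X a valuation (X(A) = Σ_k a_k v_k(A)). Define the index i_f(v) = X(B⁻_f(v)) - X(S⁻_f(v)), where S⁻_f(v) is the subgraph induced on {w neighbor of v : f(w) < f(v)} and B⁻_f(v) is the subgraph induced on {v} ∪ {w neighbor of v : f(w) < f(v)}. Then Σ_{v∈V} i_f(v) = X(G). -/
open Finset

variable {V : Type*} [Fintype V] [DecidableEq V]

open scoped Classical in
/-- Vertices in the sphere at `v` where `f` takes smaller values. -/
noncomputable def Sminus (G : SimpleGraph V) [DecidableRel G.Adj] (f : V → ℝ)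
    (v : V) : Finset V :=
  (G.neighborFinset v).filter (fun w => f w < f v)

/-- A valuation with coefficient vector `a`. -/
def valX {W : Type*} [Fintype W] [DecidableEq W] (a : ℕ → ℝ)
    (H : SimpleGraph W) [DecidableRel H.Adj] : ℝ :=
  ∑ k ∈ Finset.range (Fintype.card W + 1), a k * (nf H k : ℝ)

/-- number of (k+1)-cliques of G contained in t -/
def cnt (G : SimpleGraph V) [DecidableRel G.Adj] (t : Finset V) (k : ℕ) : ℕ :=
  ((simplices G).filter fun s => s.card = k + 1 ∧ s ⊆ t).card

lemma nf_induce (G : SimpleGraph V) [DecidableRel G.Adj] (t : Finset V) (k : ℕ) :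
    nf (SimpleGraph.induce (↑t : Set V) G) k = cnt G t k := by
  classical
  unfold nf cnt
  apply Finset.card_bij (fun s _ => s.map (Function.Embedding.subtype _))
  · rintro s hs
    simp only [Finset.mem_filter, mem_simplices] at hs ⊢
    obtain ⟨⟨hne, hcl⟩, hcard⟩ := hs
    refine ⟨⟨?_, ?_⟩, ?_, ?_⟩
    · exact hne.map
    · rintro a ha b hb hab
      simp only [Finset.mem_map, Function.Embedding.coe_subtype] at ha hb
      obtain ⟨a', ha', rfl⟩ := ha
      obtain ⟨b', hb', rfl⟩ := hb
      have := hcl a' ha' b' hb' (fun h => hab (by rw [h]))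
      simpa using this
    · simpa using hcard
    · intro x hx
      simp only [Finset.mem_map, Function.Embedding.coe_subtype] at hx
      obtain ⟨x', _, rfl⟩ := hx
      simpa using x'.2
  · intro s₁ h₁ s₂ h₂ h
    exact Finset.map_injective _ h
  · rintro u hu
    simp only [Finset.mem_filter, mem_simplices] at hu
    obtain ⟨⟨hne, hcl⟩, hcard, hsub⟩ := hu
    refine ⟨u.subtype (fun x => x ∈ (↑t : Set V)), ?_, ?_⟩
    · have hmap : (u.subtype (fun x => x ∈ (↑t : Set V))).map
          (Function.Embedding.subtype _) = u := by
        rw [Finset.subtype_map]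
        apply Finset.filter_true_of_mem
        intro x hx
        exact hsub hx
      simp only [Finset.mem_filter, mem_simplices]
      refine ⟨⟨?_, ?_⟩, ?_⟩
      · obtain ⟨x, hx⟩ := hne
        exact ⟨⟨x, hsub hx⟩, by simpa using hx⟩
      · rintro ⟨x, hx⟩ hxm ⟨y, hy⟩ hym hxy
        simp only [Finset.mem_subtype] at hxm hym
        have : x ≠ y := fun h => hxy (Subtype.ext h)
        have := hcl x hxm y hym this
        simpa using this
      · rw [← Finset.card_map (Function.Embedding.subtype _), hmap, hcard]
    · rw [Finset.subtype_map]
      apply Finset.filter_true_of_mem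
      intro x hx
      exact hsub hx

lemma nf_zero_of_lt {W : Type*} [Fintype W] [DecidableEq W]
    (H : SimpleGraph W) [DecidableRel H.Adj] {k : ℕ} (hk : Fintype.card W < k + 1) :
    nf H k = 0 := by
  unfold nf
  rw [Finset.card_eq_zero, Finset.filter_eq_empty_iff]
  intro s _
  intro hcard
  have := Finset.card_le_univ s
  omega

lemma valX_eq_sum {W : Type*} [Fintype W] [DecidableEq W] (a : ℕ → ℝ)
    (H : SimpleGraph W) [DecidableRel H.Adj] {N : ℕ} (hN : Fintype.card W ≤ N) :
    valX a H = ∑ k ∈ Finset.range (N + 1), a k * (nf H k : ℝ) := by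
  unfold valX
  apply Finset.sum_subset
  · intro x hx
    simp only [Finset.mem_range] at hx ⊢
    omega
  · intro x _ hx
    simp only [Finset.mem_range, not_lt] at hx
    rw [nf_zero_of_lt H (by omega)]
    simp

lemma cnt_insert_eq (G : SimpleGraph V) [DecidableRel G.Adj] (f : V → ℝ)
    (hf : Function.Injective f) (v : V) (k : ℕ) :
    cnt G (insert v (Sminus G f v)) k =
      cnt G (Sminus G f v) k +
        ((simplices G).filter fun s => s.card = k + 1 ∧ v ∈ s ∧ ∀ w ∈ s, f w ≤ f v).card := by
  classical
  have hvS : v ∉ Sminus G f v := by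
    simp [Sminus]
  unfold cnt
  rw [← Finset.card_filter_add_card_filter_not
    (s := (simplices G).filter fun s => s.card = k + 1 ∧ s ⊆ insert v (Sminus G f v))
    (p := fun s => v ∈ s)]
  rw [add_comm]
  congr 1
  · -- v ∉ s part equals cnt of Sminus
    rw [Finset.filter_filter]
    apply Finset.card_nbij id
    · intro s hs
      simp only [Finset.mem_coe, id, Finset.mem_filter] at hs ⊢
      obtain ⟨hsimp, ⟨hcard, hsub⟩, hv⟩ := hs
      refine ⟨hsimp, hcard, ?_⟩
      intro w hw
      rcases Finset.mem_insert.mp (hsub hw) with h | h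
      · exact absurd (h ▸ hw) hv
      · exact h
    · intro s₁ _ s₂ _ h
      exact h
    · intro s hs
      simp only [Set.mem_image, Finset.coe_filter, Set.mem_setOf_eq] at hs ⊢
      obtain ⟨hsimp, hcard, hsub⟩ := hs
      exact ⟨s, ⟨hsimp, ⟨hcard, hsub.trans (Finset.subset_insert _ _)⟩,
        fun hv => hvS (hsub hv)⟩, rfl⟩
  · -- v ∈ s part equals the "max" count
    rw [Finset.filter_filter]
    apply Finset.card_nbij id
    · intro s hs
      simp only [Finset.mem_coe, id, Finset.mem_filter, mem_simplices] at hs ⊢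
      obtain ⟨⟨hne, hcl⟩, ⟨hcard, hsub⟩, hv⟩ := hs
      refine ⟨⟨hne, hcl⟩, hcard, hv, ?_⟩
      intro w hw
      rcases Finset.mem_insert.mp (hsub hw) with h | h
      · exact le_of_eq (congrArg f h)
      · have h2 : G.Adj v w ∧ f w < f v := by
          simpa [Sminus, SimpleGraph.mem_neighborFinset] using h
        exact le_of_lt h2.2
    · intro s₁ _ s₂ _ h
      exact h
    · intro s hs
      simp only [Set.mem_image, Finset.coe_filter, Set.mem_setOf_eq, mem_simplices] at hs ⊢
      obtain ⟨⟨hne, hcl⟩, hcard, hv, hmax⟩ := hs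
      refine ⟨s, ⟨⟨hne, hcl⟩, ⟨hcard, ?_⟩, hv⟩, rfl⟩
      intro w hw
      rcases eq_or_ne w v with h | h
      · rw [h]; exact Finset.mem_insert_self v _
      · apply Finset.mem_insert_of_mem
        have hadj : G.Adj v w := hcl v hv w hw (Ne.symm h)
        have hlt : f w < f v := lt_of_le_of_ne (hmax w hw) (fun he => h (hf he))
        simp only [Sminus, Finset.mem_filter, SimpleGraph.mem_neighborFinset]
        exact ⟨hadj, hlt⟩

lemma sum_maxcount (G : SimpleGraph V) [DecidableRel G.Adj] (f : V → ℝ)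
    (hf : Function.Injective f) (k : ℕ) :
    ∑ v : V, ((simplices G).filter fun s => s.card = k + 1 ∧ v ∈ s ∧ ∀ w ∈ s, f w ≤ f v).card
      = nf G k := by
  classical
  unfold nf
  have key : ∀ s ∈ (simplices G).filter (fun s => s.card = k + 1),
      (Finset.univ.filter (fun v : V => v ∈ s ∧ ∀ w ∈ s, f w ≤ f v)).card = 1 := by
    intro s hs
    simp only [Finset.mem_filter, mem_simplices] at hs
    obtain ⟨⟨hne, _⟩, _⟩ := hs
    obtain ⟨v₀, hv₀, hmax⟩ := Finset.exists_max_image s f hne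
    rw [Finset.card_eq_one]
    refine ⟨v₀, ?_⟩
    ext u
    simp only [Finset.mem_filter, Finset.mem_univ, true_and, Finset.mem_singleton]
    constructor
    · rintro ⟨hu, hmu⟩
      exact hf (le_antisymm (hmax u hu) (hmu v₀ hv₀))
    · rintro rfl
      exact ⟨hv₀, hmax⟩
  calc ∑ v : V, ((simplices G).filter fun s => s.card = k + 1 ∧ v ∈ s ∧ ∀ w ∈ s, f w ≤ f v).card
      = ∑ v : V, ∑ s ∈ (simplices G).filter (fun s => s.card = k + 1),
          if v ∈ s ∧ ∀ w ∈ s, f w ≤ f v then 1 else 0 := by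
        apply Finset.sum_congr rfl
        intro v _
        rw [show ((simplices G).filter fun s => s.card = k + 1 ∧ v ∈ s ∧ ∀ w ∈ s, f w ≤ f v)
            = ((simplices G).filter (fun s => s.card = k + 1)).filter
                (fun s => v ∈ s ∧ ∀ w ∈ s, f w ≤ f v) from by rw [Finset.filter_filter],
          Finset.card_filter]
    _ = ∑ s ∈ (simplices G).filter (fun s => s.card = k + 1), ∑ v : V,
          if v ∈ s ∧ ∀ w ∈ s, f w ≤ f v then 1 else 0 := Finset.sum_comm
    _ = ∑ _s ∈ (simplices G).filter (fun s => s.card = k + 1), 1 := by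
        apply Finset.sum_congr rfl
        intro s hs
        rw [← Finset.card_filter]
        exact key s hs
    _ = _ := by rw [Finset.sum_const, smul_eq_mul, mul_one]

theorem poincare_hopf_valuation (G : SimpleGraph V) [DecidableRel G.Adj]
    (f : V → ℝ) (hf : Function.Injective f) (a : ℕ → ℝ) :
    ∑ v : V,
        (valX a (SimpleGraph.induce (((insert v (Sminus G f v) : Finset V)) : Set V) G)
          - valX a (SimpleGraph.induce ((Sminus G f v : Finset V) : Set V) G))
      = valX a G := by
  classical
  set N := Fintype.card V with hN
  have hcard : ∀ t : Finset V, Fintype.card (↑t : Set V) ≤ N := by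
    intro t
    exact Fintype.card_le_of_injective Subtype.val Subtype.val_injective
  have hterm : ∀ v : V,
      valX a (SimpleGraph.induce (((insert v (Sminus G f v) : Finset V)) : Set V) G)
        - valX a (SimpleGraph.induce ((Sminus G f v : Finset V) : Set V) G)
      = ∑ k ∈ Finset.range (N + 1), a k *
          (((simplices G).filter fun s => s.card = k + 1 ∧ v ∈ s ∧ ∀ w ∈ s, f w ≤ f v).card : ℝ) := by
    intro v
    rw [valX_eq_sum a _ (hcard _), valX_eq_sum a _ (hcard _), ← Finset.sum_sub_distrib]
    apply Finset.sum_congr rfl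
    intro k _
    rw [nf_induce, nf_induce, cnt_insert_eq G f hf v k]
    push_cast
    ring
  simp_rw [hterm]
  rw [Finset.sum_comm]
  rw [valX_eq_sum a G (le_refl N)]
  apply Finset.sum_congr rfl
  intro k _
  rw [← Finset.mul_sum, ← Nat.cast_sum, sum_maxcount G f hf k]
end

section
/- Poincaré-Hopf for Euler characteristic: for a finite simple graph G and an injective function f: V → ℝ, defining i_f(v) = 1 - χ(S⁻_f(v)) where S⁻_f(v) is the subgraph induced on the neighbors w of v with f(w) < f(v), one has Σ_{v∈V} i_f(v) = χ(G). -/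
open Finset

variable {V : Type*} [Fintype V] [DecidableEq V]

lemma euler_induce (G : SimpleGraph V) [DecidableRel G.Adj] (A : Finset V) :
    euler (SimpleGraph.induce ((A : Finset V) : Set V) G)
      = ∑ t ∈ (simplices G).filter (· ⊆ A), (-1 : ℤ) ^ dimS t := by
  unfold euler
  refine Finset.sum_bij' (fun s _ => s.map ⟨Subtype.val, Subtype.val_injective⟩)
    (fun t ht => t.attach.map ⟨fun x => (⟨x.1, by
      have := (Finset.mem_filter.mp ht).2 x.2
      exact this⟩ : ((A : Set V) : Type _)), fun a b h => by
        have h' := congrArg Subtype.val h; exact Subtype.ext h'⟩) ?_ ?_ ?_ ?_ ?_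
  · intro s hs
    rw [Finset.mem_filter]
    rw [mem_simplices] at hs ⊢
    constructor
    · constructor
      · obtain ⟨x, hx⟩ := hs.1
        exact ⟨x.1, Finset.mem_map_of_mem _ hx⟩
      · intro a ha b hb hab
        simp only [Finset.mem_map, Function.Embedding.coeFn_mk] at ha hb
        obtain ⟨a', ha', rfl⟩ := ha
        obtain ⟨b', hb', rfl⟩ := hb
        have := hs.2 a' ha' b' hb' (fun h => hab (congrArg Subtype.val h))
        exact this
    · intro a ha
      simp only [Finset.mem_map, Function.Embedding.coeFn_mk] at ha
      obtain ⟨a', _, rfl⟩ := ha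
      exact a'.2
  · intro t ht
    rw [Finset.mem_filter, mem_simplices] at ht
    rw [mem_simplices]
    constructor
    · obtain ⟨x, hx⟩ := ht.1.1
      exact ⟨_, Finset.mem_map_of_mem _ (Finset.mem_attach _ ⟨x, hx⟩)⟩
    · intro a ha b hb hab
      simp only [Finset.mem_map, Finset.mem_attach, Function.Embedding.coeFn_mk,
        true_and] at ha hb
      obtain ⟨a', rfl⟩ := ha
      obtain ⟨b', rfl⟩ := hb
      exact ht.1.2 a'.1 a'.2 b'.1 b'.2 (fun h => hab (by simp [Subtype.ext_iff, h]))
  · intro s hs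
    ext x
    constructor
    · intro h
      obtain ⟨⟨y, hy⟩, _, rfl⟩ := Finset.mem_map.mp h
      obtain ⟨z, hz, rfl⟩ := Finset.mem_map.mp hy
      exact hz
    · intro hx
      exact Finset.mem_map.mpr ⟨⟨x.1, Finset.mem_map_of_mem _ hx⟩, Finset.mem_attach _ _, rfl⟩
  · intro t ht
    ext x
    simp only [Finset.mem_map, Finset.mem_attach, Function.Embedding.coeFn_mk, true_and]
    constructor
    · rintro ⟨a, ⟨b, rfl⟩, rfl⟩; exact b.2
    · intro hx
      exact ⟨⟨x, (Finset.mem_filter.mp ht).2 hx⟩, ⟨⟨x, hx⟩, rfl⟩, rfl⟩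
  · intro s hs
    simp [dimS]

theorem poincare_hopf_euler (G : SimpleGraph V) [DecidableRel G.Adj]
    (f : V → ℝ) (hf : Function.Injective f) :
    ∑ v : V, (1 - euler (SimpleGraph.induce ((Sminus G f v : Finset V) : Set V) G))
      = euler G := by
  classical
  have key : ∀ v : V,
      1 - euler (SimpleGraph.induce ((Sminus G f v : Finset V) : Set V) G)
        = ∑ s ∈ (simplices G).filter (fun s => v ∈ s ∧ ∀ w ∈ s, f w ≤ f v),
            (-1 : ℤ) ^ dimS s := by
    intro v
    rw [euler_induce]
    set A := Sminus G f v with hA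
    have hvA : v ∉ A := by
      simp [hA, Sminus]
    have hmemA : ∀ w, w ∈ A ↔ G.Adj v w ∧ f w < f v := by
      intro w; simp [hA, Sminus]
    set T := (simplices G).filter (· ⊆ A) with hT
    have hemp : (∅ : Finset V) ∉ T := by
      intro h
      rw [hT, Finset.mem_filter, mem_simplices] at h
      exact h.1.1.ne_empty rfl
    have hsum : ∑ s ∈ (simplices G).filter (fun s => v ∈ s ∧ ∀ w ∈ s, f w ≤ f v),
        (-1 : ℤ) ^ dimS s = ∑ t ∈ insert ∅ T, (-1 : ℤ) ^ t.card := by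
      refine Finset.sum_bij' (fun s _ => s.erase v) (fun t _ => insert v t) ?_ ?_ ?_ ?_ ?_
      · intro s hs
        show s.erase v ∈ insert ∅ T
        rw [Finset.mem_filter, mem_simplices] at hs
        obtain ⟨⟨_, hadj⟩, hv, hle⟩ := hs
        rcases Finset.eq_empty_or_nonempty (s.erase v) with he | hne
        · rw [he]; exact Finset.mem_insert_self _ _
        · refine Finset.mem_insert_of_mem ?_
          rw [hT, Finset.mem_filter, mem_simplices]
          refine ⟨⟨hne, fun a ha b hb hab =>
            hadj a (Finset.mem_of_mem_erase ha) b (Finset.mem_of_mem_erase hb) hab⟩, ?_⟩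
          intro w hw
          have hwv : w ≠ v := Finset.ne_of_mem_erase hw
          have hws : w ∈ s := Finset.mem_of_mem_erase hw
          rw [hmemA]
          exact ⟨(hadj w hws v hv hwv).symm, lt_of_le_of_ne (hle w hws) (fun h => hwv (hf h))⟩
      · intro t ht
        rw [Finset.mem_filter, mem_simplices]
        have htsub : ∀ w ∈ t, G.Adj v w ∧ f w < f v := by
          intro w hw
          rcases Finset.mem_insert.mp ht with rfl | ht'
          · exact absurd hw (Finset.notMem_empty w)
          · exact (hmemA w).mp ((Finset.mem_filter.mp ht').2 hw)
        refine ⟨⟨⟨v, Finset.mem_insert_self _ _⟩, ?_⟩, Finset.mem_insert_self _ _, ?_⟩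
        · intro a ha b hb hab
          rcases Finset.mem_insert.mp ha with rfl | ha' <;>
            rcases Finset.mem_insert.mp hb with rfl | hb'
          · exact absurd rfl hab
          · exact (htsub b hb').1
          · exact ((htsub a ha').1).symm
          · rcases Finset.mem_insert.mp ht with rfl | ht'
            · exact absurd ha' (Finset.notMem_empty a)
            · exact (mem_simplices.mp (Finset.mem_filter.mp ht').1).2 a ha' b hb' hab
        · intro w hw
          rcases Finset.mem_insert.mp hw with rfl | hw'
          · exact le_refl _
          · exact le_of_lt (htsub w hw').2
      · intro s hs
        exact Finset.insert_erase (Finset.mem_filter.mp hs).2.1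
      · intro t ht
        refine Finset.erase_insert ?_
        intro hvt
        rcases Finset.mem_insert.mp ht with rfl | ht'
        · exact Finset.notMem_empty v hvt
        · exact hvA ((Finset.mem_filter.mp ht').2 hvt)
      · intro s hs
        have hv : v ∈ s := (Finset.mem_filter.mp hs).2.1
        have : s.card = (s.erase v).card + 1 := by
          rw [Finset.card_erase_of_mem hv]
          have := Finset.card_pos.mpr ⟨v, hv⟩
          omega
        simp [dimS, this]
    rw [hsum, Finset.sum_insert hemp]
    have : ∑ t ∈ T, (-1 : ℤ) ^ t.card = - ∑ t ∈ T, (-1 : ℤ) ^ dimS t := by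
      rw [← Finset.sum_neg_distrib]
      refine Finset.sum_congr rfl fun t ht => ?_
      have hne : t.Nonempty := (mem_simplices.mp (Finset.mem_filter.mp ht).1).1
      have hc : t.card = dimS t + 1 := by
        have := Finset.card_pos.mpr hne
        simp [dimS]; omega
      rw [hc, pow_succ]
      ring
    rw [this, Finset.card_empty, pow_zero]
    ring
  rw [Finset.sum_congr rfl fun v _ => key v]
  unfold euler
  have : ∀ v : V, ∑ s ∈ (simplices G).filter (fun s => v ∈ s ∧ ∀ w ∈ s, f w ≤ f v),
      (-1 : ℤ) ^ dimS s
      = ∑ s ∈ simplices G, if v ∈ s ∧ ∀ w ∈ s, f w ≤ f v then (-1 : ℤ) ^ dimS s else 0 := by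
    intro v; rw [Finset.sum_filter]
  rw [Finset.sum_congr rfl fun v _ => this v, Finset.sum_comm]
  refine Finset.sum_congr rfl fun s hs => ?_
  obtain ⟨hne, _⟩ := mem_simplices.mp hs
  obtain ⟨v0, hv0, hmax⟩ := Finset.exists_max_image s f hne
  have huniq : ∀ v : V, (v ∈ s ∧ ∀ w ∈ s, f w ≤ f v) ↔ v = v0 := by
    intro v
    constructor
    · rintro ⟨hv, hm⟩
      exact hf (le_antisymm (hmax v hv) (hm v0 hv0))
    · rintro rfl; exact ⟨hv0, hmax⟩
  calc ∑ v : V, (if v ∈ s ∧ ∀ w ∈ s, f w ≤ f v then (-1 : ℤ) ^ dimS s else 0)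
      = ∑ v : V, (if v = v0 then (-1 : ℤ) ^ dimS s else 0) := by
        exact Finset.sum_congr rfl fun v _ => if_congr (huniq v) rfl rfl
    _ = (-1 : ℤ) ^ dimS s := by simp
end
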